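/- In the linear case f(x) = λx, every solution x of the controlled system with x(0) = x₀ satisfies x(3kτ) = αᵏ·x₀ for all k ∈ ℕ, where α = e^{3λτ}·(1 + ετ·(1 − e^{λτ})·e^{−2λτ}). In particular x(3τ) = e^{3λτ}·(1 + ετ·(1 − e^{λτ})·e^{−2λτ})·x₀. -/

import Mathlib

/-- A solution of the ODFC system based on a delayed states difference:
`ẋ(t) = f(x(t)) + ε(t)·(x(t−2τ) − x(t−τ))` with `ε(t) = 0` on `[3kτ,(3k+2)τ)` and
`ε(t) = ε` on `[(3k+2)τ,(3k+3)τ)`, with initial value `x₀`. -/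
def IsSolDiff (f : ℝ → ℝ) (ε τ x₀ : ℝ) (x : ℝ → ℝ) : Prop :=
  ContinuousOn x (Set.Ici 0) ∧ x 0 = x₀ ∧
  (∀ k : ℕ, ∀ t ∈ Set.Ico (3 * (k : ℝ) * τ) ((3 * (k : ℝ) + 2) * τ),
      HasDerivWithinAt x (f (x t)) (Set.Ici t) t) ∧
  (∀ k : ℕ, ∀ t ∈ Set.Ico ((3 * (k : ℝ) + 2) * τ) ((3 * (k : ℝ) + 3) * τ),
      HasDerivWithinAt x (f (x t) + ε * (x (t - 2 * τ) - x (t - τ))) (Set.Ici t) t)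

/-!
On each period `[3kτ, 3kτ + 3τ]` the solution first grows freely for time `2τ`,
`x(t) = x(3kτ)·e^{λ(t - 3kτ)}`. On the last third both delayed values lie in this free
stretch, so the feedback `ε(x(t - 2τ) - x(t - τ))` equals `c·e^{λ(t - 3kτ - 2τ)}` with
`c = ε(1 - e^{λτ})·x(3kτ)`, a resonant forcing that variation of constants integrates to
`(x(3kτ + 2τ) + cτ)·e^{λτ}` at the end of the period. That is `α·x(3kτ)`, and induction on `k`
gives `αᵏ·x₀`.
-/

open Real Set

-- Variation of constants: `x(t)·e^{-λ(t-a)} - c(t-a)` has right derivative zero.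
theorem eq_of_hasDerivWithinAt_resonant {lam c a b : ℝ} {x : ℝ → ℝ}
    (hcont : ContinuousOn x (Icc a b))
    (hderiv : ∀ t ∈ Ico a b,
      HasDerivWithinAt x (lam * x t + c * exp (lam * (t - a))) (Ici t) t) :
    ∀ t ∈ Icc a b, x t = (x a + c * (t - a)) * exp (lam * (t - a)) := by
  have hexp (t : ℝ) : exp (lam * (t - a)) * exp (-(lam * (t - a))) = 1 := by
    rw [← exp_add, add_neg_cancel, exp_zero]
  set F : ℝ → ℝ := fun t => x t * exp (-(lam * (t - a))) - c * (t - a)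
  have hFcont : ContinuousOn F (Icc a b) := by fun_prop
  have hF' : ∀ t ∈ Ico a b, HasDerivWithinAt F 0 (Ici t) t := by
    intro t ht
    have hE : HasDerivAt (fun s => exp (-(lam * (s - a)))) (exp (-(lam * (t - a))) * -lam) t := by
      simpa using ((((hasDerivAt_id t).sub_const a).const_mul lam).neg).exp
    have hL : HasDerivAt (fun s => c * (s - a)) c t := by
      simpa using ((hasDerivAt_id t).sub_const a).const_mul c
    refine (((hderiv t ht).mul hE.hasDerivWithinAt).sub hL.hasDerivWithinAt).congr_deriv ?_
    linear_combination c * hexp t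
  intro t ht
  have hFt : F t = F a := constant_of_has_deriv_right_zero hFcont hF' t ht
  simp only [F, sub_self, mul_zero, neg_zero, exp_zero, mul_one, sub_zero] at hFt
  linear_combination exp (lam * (t - a)) * hFt - x t * hexp t

noncomputable def periodMultiplier (lam ε τ : ℝ) : ℝ :=
  exp (3 * lam * τ) * (1 + ε * τ * (1 - exp (lam * τ)) * exp (-(2 * lam * τ)))

namespace IsSolDiff

variable {lam ε τ x₀ : ℝ} {x : ℝ → ℝ}

theorem eq_on_uncontrolled (hx : IsSolDiff (fun y => lam * y) ε τ x₀ x) (hτ : 0 < τ) (k : ℕ) :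
    ∀ t ∈ Icc (3 * (k : ℝ) * τ) (3 * k * τ + 2 * τ),
      x t = x (3 * k * τ) * exp (lam * (t - 3 * k * τ)) := by
  have hstart : 0 ≤ 3 * (k : ℝ) * τ := by positivity
  intro t ht
  have := eq_of_hasDerivWithinAt_resonant (c := 0)
    (hx.1.mono fun s hs => hstart.trans hs.1) (fun s hs => by
      simpa using hx.2.2.1 k s ⟨hs.1, by linarith [hs.2]⟩) t ht
  simpa using this

theorem eq_on_controlled (hx : IsSolDiff (fun y => lam * y) ε τ x₀ x) (hτ : 0 < τ) (k : ℕ) :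
    ∀ t ∈ Icc (3 * (k : ℝ) * τ + 2 * τ) (3 * k * τ + 3 * τ),
      x t = (x (3 * k * τ + 2 * τ) + ε * (1 - exp (lam * τ)) * x (3 * k * τ) *
        (t - (3 * k * τ + 2 * τ))) * exp (lam * (t - (3 * k * τ + 2 * τ))) := by
  have hstart : 0 ≤ 3 * (k : ℝ) * τ := by positivity
  refine eq_of_hasDerivWithinAt_resonant
    (hx.1.mono fun s hs => by simp only [mem_Ici]; linarith [hs.1]) fun t ht => ?_
  have hfree := hx.eq_on_uncontrolled hτ k
  have hdelay : x (t - 2 * τ) - x (t - τ) = (1 - exp (lam * τ)) * x (3 * k * τ) *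
      exp (lam * (t - (3 * k * τ + 2 * τ))) := by
    rw [hfree (t - 2 * τ) ⟨by linarith [ht.1], by linarith [ht.2]⟩,
      hfree (t - τ) ⟨by linarith [ht.1], by linarith [ht.2]⟩,
      show lam * (t - τ - 3 * k * τ) = lam * τ + lam * (t - (3 * k * τ + 2 * τ)) by ring,
      show lam * (t - 2 * τ - 3 * k * τ) = lam * (t - (3 * k * τ + 2 * τ)) by ring, exp_add]
    ring
  have hderiv := hx.2.2.2 k t ⟨by linarith [ht.1], by linarith [ht.2]⟩
  rw [hdelay] at hderiv
  convert hderiv using 1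
  ring

theorem period_step (hx : IsSolDiff (fun y => lam * y) ε τ x₀ x) (hτ : 0 < τ) (k : ℕ) :
    x (3 * ((k + 1 : ℕ) : ℝ) * τ) = periodMultiplier lam ε τ * x (3 * k * τ) := by
  have hmid : x (3 * k * τ + 2 * τ) = x (3 * k * τ) * exp (lam * τ) ^ 2 := by
    have := hx.eq_on_uncontrolled hτ k (3 * k * τ + 2 * τ) ⟨by linarith, le_rfl⟩
    rwa [← exp_nat_mul, show ((2 : ℕ) : ℝ) * (lam * τ) = lam * (3 * k * τ + 2 * τ - 3 * k * τ) by
      push_cast; ring]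
  have hend : x (3 * k * τ + 3 * τ) = (x (3 * k * τ + 2 * τ) +
      ε * (1 - exp (lam * τ)) * x (3 * k * τ) * τ) * exp (lam * τ) := by
    have := hx.eq_on_controlled hτ k (3 * k * τ + 3 * τ) ⟨by linarith, le_rfl⟩
    rwa [show 3 * (k : ℝ) * τ + 3 * τ - (3 * k * τ + 2 * τ) = τ by ring] at this
  have hcube : exp (3 * lam * τ) = exp (lam * τ) ^ 3 := by
    rw [← exp_nat_mul]; ring_nf
  have hinv : exp (-(2 * lam * τ)) * exp (lam * τ) ^ 2 = 1 := by
    rw [← exp_nat_mul, ← exp_add]; ring_nf; exact exp_zero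
  rw [show 3 * ((k + 1 : ℕ) : ℝ) * τ = 3 * k * τ + 3 * τ by push_cast; ring, hend, hmid,
    periodMultiplier, hcube]
  linear_combination -(exp (lam * τ) * ε * τ * (1 - exp (lam * τ)) * x (3 * k * τ)) * hinv

end IsSolDiff

theorem odfc_states_difference_linear_period_iterates_general
    (lam ε τ x₀ : ℝ) (hτ : 0 < τ)
    (x : ℝ → ℝ) (hx : IsSolDiff (fun y => lam * y) ε τ x₀ x) :
    (∀ k : ℕ, x (3 * (k : ℝ) * τ) =
        (Real.exp (3 * lam * τ) *
          (1 + ε * τ * (1 - Real.exp (lam * τ)) * Real.exp (-(2 * lam * τ)))) ^ k * x₀) ∧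
    x (3 * τ) = Real.exp (3 * lam * τ) *
        (1 + ε * τ * (1 - Real.exp (lam * τ)) * Real.exp (-(2 * lam * τ))) * x₀ := by
  have iterates (k : ℕ) : x (3 * (k : ℝ) * τ) = periodMultiplier lam ε τ ^ k * x₀ := by
    induction k with
    | zero => simpa using hx.2.1
    | succ k ih => rw [hx.period_step hτ k, ih, pow_succ']; ring
  exact ⟨iterates, by simpa [periodMultiplier] using iterates 1⟩

/-- In the linear case `f(x) = λx`, any solution of the states-difference ODFC system
satisfies `x(3kτ) = αᵏ·x₀` with `α = e^{3λτ}(1 + ετ(1 − e^{λτ})e^{−2λτ})`; in particular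
`x(3τ) = e^{3λτ}(1 + ετ(1 − e^{λτ})e^{−2λτ})·x₀`. -/
theorem odfc_states_difference_linear_period_iterates
    (lam ε τ x₀ : ℝ) (hlam : 0 < lam) (hτ : 0 < τ)
    (x : ℝ → ℝ) (hx : IsSolDiff (fun y => lam * y) ε τ x₀ x) :
    (∀ k : ℕ, x (3 * (k : ℝ) * τ) =
        (Real.exp (3 * lam * τ) *
          (1 + ε * τ * (1 - Real.exp (lam * τ)) * Real.exp (-(2 * lam * τ)))) ^ k * x₀) ∧
    x (3 * τ) = Real.exp (3 * lam * τ) *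
        (1 + ε * τ * (1 - Real.exp (lam * τ)) * Real.exp (-(2 * lam * τ))) * x₀ :=
  odfc_states_difference_linear_period_iterates_general lam ε τ x₀ hτ x hx
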